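/- arXiv:quant-ph/0206053 — 2 statements merged into one kernel-verified Lean document; each statement's English description precedes it below -/
import Mathlib

section
/- Let l, m ≥ 0 be integers with l ∧ m = min{l,m} ≥ 1 and n = l + m. Then Ξ(l,m) = a^l · (conj a)^m · Δ^m · Σ_{γ=1}^{l∧m} (−|b|²/|a|²)^γ · C(l−1, γ−1) · C(m−1, γ−1) · [ ((l−γ)/(aγ))·P + ((m−γ)/(Δ·(conj a)·γ))·Q − (1/(Δ·(conj b)))·R + (1/b)·S ], where C(n,k) denotes the binomial coefficient and Δ = ad − bc. -/
/-!
Splitting off the first letter of a word gives `Ξ(l+1, m+1) = P Ξ(l, m+1) + Q Ξ(l+1, m)`, with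
`Ξ(l, 0) = Pˡ` and `Ξ(0, m) = Qᵐ`. The letters are rank one and multiply as `PP = aP`, `PQ = bR`,
`QP = cS`, `QQ = dQ`, `PR = aR`, `PS = bP`, `QR = cQ`, `QS = dS`, so `Ξ` stays in the span of
`P, Q, R, S` and its four coefficients obey Pascal-type recursions. These are solved by the sums
`∑ δ, x^δ C(l, δ+i) C(m, δ+j)` with `x = bc/(ad)`. Unitarity gives `d = Δ ā` and `c = -Δ b̄`, which
turns `x` into `-|b|²/|a|²`.
-/

open Matrix Finset
open scoped Classical

noncomputable section

/-- `Xi P Q l m` is the sum, over all words of length `l + m` in the letters `P`, `Q`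
with exactly `l` occurrences of `P` and `m` occurrences of `Q`, of the ordered product. -/
def Xi (P Q : Matrix (Fin 2) (Fin 2) ℂ) (l m : ℕ) : Matrix (Fin 2) (Fin 2) ℂ :=
  ∑ w ∈ Finset.univ.filter
      (fun w : Fin (l + m) → Bool => (Finset.univ.filter fun i => w i = true).card = m),
    (List.ofFn fun i => if w i then Q else P).prod

section WordSum

variable {R : Type*} [Semiring R] (P Q : R)

def wordProd {n : ℕ} (w : Fin n → Bool) : R :=
  (List.ofFn fun i => if w i then Q else P).prod

def wordSum (n k : ℕ) : R :=
  ∑ w ∈ univ.filter (fun w : Fin n → Bool => #{i | w i = true} = k), wordProd P Q w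

theorem Xi_eq_wordSum (P Q : Matrix (Fin 2) (Fin 2) ℂ) (l m : ℕ) :
    Xi P Q l m = wordSum P Q (l + m) m :=
  rfl

theorem card_filter_cons_eq_true {n : ℕ} (x : Bool) (w : Fin n → Bool) :
    #{i | (Fin.cons x w : Fin (n + 1) → Bool) i = true} = #{i | w i = true} + x.toNat := by
  rw [card_filter, card_filter, Fin.sum_univ_succ, add_comm]
  cases x <;> simp

theorem wordSum_succ (n k : ℕ) :
    wordSum P Q (n + 1) k = P * wordSum P Q n k +
      Q * ∑ w ∈ univ.filter (fun w : Fin n → Bool => #{i | w i = true} + 1 = k),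
        wordProd P Q w := by
  simp only [wordSum, sum_filter, mul_sum]
  rw [← (Fin.consEquiv fun _ => Bool).sum_comp, Fintype.sum_prod_type, Fintype.sum_bool]
  simp only [Fin.consEquiv_apply, wordProd, List.ofFn_succ, Fin.cons_zero, Fin.cons_succ,
    card_filter_cons_eq_true, Bool.toNat_true, Bool.toNat_false, add_zero, mul_ite, mul_zero,
    List.prod_cons, if_true, Bool.false_eq_true, if_false]
  exact add_comm _ _

theorem wordSum_succ_zero (n : ℕ) : wordSum P Q (n + 1) 0 = P * wordSum P Q n 0 := by
  simp [wordSum_succ]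

theorem wordSum_succ_succ (n k : ℕ) :
    wordSum P Q (n + 1) (k + 1) = P * wordSum P Q n (k + 1) + Q * wordSum P Q n k := by
  rw [wordSum_succ]; simp only [add_left_inj]; rfl

theorem wordSum_zero_right (n : ℕ) : wordSum P Q n 0 = P ^ n := by
  induction n with
  | zero => simp [wordSum, wordProd]
  | succ n ih => rw [wordSum_succ_zero, ih, pow_succ']

theorem wordSum_of_lt {n k : ℕ} (h : n < k) : wordSum P Q n k = 0 := by
  refine sum_eq_zero fun w hw => absurd (mem_filter.1 hw).2 (ne_of_lt ?_)
  exact (card_filter_le _ _).trans_lt (by simpa using h)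

theorem wordSum_self (n : ℕ) : wordSum P Q n n = Q ^ n := by
  induction n with
  | zero => simp [wordSum, wordProd]
  | succ n ih =>
    rw [wordSum_succ_succ, ih, wordSum_of_lt P Q n.lt_succ_self, mul_zero, zero_add, pow_succ']

end WordSum

section RankOne

variable {K : Type*} [Semiring K] (a b c d p q : K)

theorem top_mul_top : !![a, b; 0, 0] * !![p, q; 0, 0] = a • !![p, q; 0, 0] := by
  rw [mul_fin_two]; simp [smul_of]

theorem top_mul_bottom : !![a, b; 0, 0] * !![0, 0; p, q] = b • !![p, q; 0, 0] := by
  rw [mul_fin_two]; simp [smul_of]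

theorem bottom_mul_top : !![0, 0; c, d] * !![p, q; 0, 0] = c • !![0, 0; p, q] := by
  rw [mul_fin_two]; simp [smul_of]

theorem bottom_mul_bottom : !![0, 0; c, d] * !![0, 0; p, q] = d • !![0, 0; p, q] := by
  rw [mul_fin_two]; simp [smul_of]

theorem top_pow_succ (n : ℕ) : !![a, b; 0, 0] ^ (n + 1) = a ^ n • !![a, b; 0, 0] := by
  induction n with
  | zero => simp
  | succ n ih => rw [pow_succ, ih, smul_mul_assoc, top_mul_top, smul_smul, pow_succ]

theorem bottom_pow_succ (n : ℕ) : !![0, 0; c, d] ^ (n + 1) = d ^ n • !![0, 0; c, d] := by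
  induction n with
  | zero => simp
  | succ n ih => rw [pow_succ, ih, smul_mul_assoc, bottom_mul_bottom, smul_smul, pow_succ]

end RankOne

theorem sum_Icc_one_eq_sum_range {M : Type*} [AddCommMonoid M] (f : ℕ → M) (n : ℕ) :
    ∑ γ ∈ Icc 1 n, f γ = ∑ δ ∈ range n, f (δ + 1) := by
  rw [← Ico_add_one_right_eq_Icc, sum_Ico_eq_sum_range]
  simp [add_comm]

section ChooseSum

variable {R : Type*} [CommSemiring R] (x : R) (i j l m : ℕ)

def chooseSum : R :=
  ∑ δ ∈ range (min l m + 1), x ^ δ * l.choose (δ + i) * m.choose (δ + j)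

variable {x i j l m} in
theorem chooseSum_eq_sum_range {N : ℕ} (hN : min l m + 1 ≤ N) :
    chooseSum x i j l m = ∑ δ ∈ range N, x ^ δ * l.choose (δ + i) * m.choose (δ + j) := by
  refine sum_subset (range_subset_range.2 hN) fun δ _ hδ => ?_
  rcases min_lt_iff.1 (Nat.lt_of_succ_le (not_lt.1 (mt mem_range.2 hδ))) with h | h
  · rw [Nat.choose_eq_zero_of_lt (by omega : l < δ + i)]; simp
  · rw [Nat.choose_eq_zero_of_lt (by omega : m < δ + j)]; simp

theorem chooseSum_comm : chooseSum x i j l m = chooseSum x j i m l := by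
  rw [chooseSum, chooseSum, min_comm]
  exact sum_congr rfl fun _ _ => mul_right_comm _ _ _

theorem chooseSum_succ_left :
    chooseSum x (i + 1) j (l + 1) m = chooseSum x i j l m + chooseSum x (i + 1) j l m := by
  rw [chooseSum_eq_sum_range (N := l + m + 2) (by omega),
    chooseSum_eq_sum_range (N := l + m + 2) (by omega),
    chooseSum_eq_sum_range (N := l + m + 2) (by omega), ← sum_add_distrib]
  simp only [← add_assoc, Nat.choose_succ_succ', Nat.cast_add]
  exact sum_congr rfl fun _ _ => by ring

theorem chooseSum_zero_succ_left :
    chooseSum x 0 j (l + 1) m = chooseSum x 0 j l m + x * chooseSum x 0 (j + 1) l m := by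
  rw [chooseSum_eq_sum_range (N := l + m + 2) (by omega),
    chooseSum_eq_sum_range (N := l + m + 2) (by omega),
    chooseSum_eq_sum_range (N := l + m + 1) (by omega), sum_range_succ',
    sum_range_succ' _ (l + m + 1), mul_sum]
  simp only [Nat.choose_succ_succ', Nat.cast_add, add_mul, mul_add, sum_add_distrib, add_zero,
    Nat.choose_zero_right, fun k => show k + 1 + j = k + (j + 1) by omega, pow_succ', mul_assoc]
  ring

theorem chooseSum_zero_right :
    chooseSum x i j l 0 = l.choose i * (0 : ℕ).choose j := by
  simp [chooseSum]

theorem chooseSum_zero_left :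
    chooseSum x i j 0 m = (0 : ℕ).choose i * m.choose j := by
  simp [chooseSum]

theorem chooseSum_succ_right :
    chooseSum x i (j + 1) l (m + 1) = chooseSum x i j l m + chooseSum x i (j + 1) l m := by
  rw [chooseSum_comm, chooseSum_succ_left, chooseSum_comm, chooseSum_comm x (j + 1)]

theorem chooseSum_zero_succ_right :
    chooseSum x i 0 l (m + 1) = chooseSum x i 0 l m + x * chooseSum x (i + 1) 0 l m := by
  rw [chooseSum_comm, chooseSum_zero_succ_left, chooseSum_comm, chooseSum_comm x 0 (i + 1)]

theorem sum_Icc_eq_chooseSum (t : R) :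
    ∑ γ ∈ Icc 1 (min (l + 1) (m + 1)), x ^ γ * l.choose (γ - 1) * m.choose (γ - 1) * t =
      x * chooseSum x 0 0 l m * t := by
  rw [min_add_add_right, sum_Icc_one_eq_sum_range, chooseSum, mul_sum, sum_mul]
  refine sum_congr rfl fun δ _ => ?_
  simp only [Nat.add_sub_cancel, add_zero]
  ring

end ChooseSum

section IccSums

variable {K : Type*} [Field K] [CharZero K] (y t : K) (l m : ℕ)

theorem sum_Icc_eq_chooseSum_left :
    ∑ γ ∈ Icc 1 (min (l + 1) (m + 1)),
        y ^ γ * l.choose (γ - 1) * m.choose (γ - 1) * (((l : K) + 1 - γ) / (t * γ)) =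
      y * chooseSum y 1 0 l m / t := by
  rw [min_add_add_right, sum_Icc_one_eq_sum_range, chooseSum, mul_sum, sum_div]
  refine sum_congr rfl fun δ hδ => ?_
  have hδl : δ ≤ l := by simp at hδ; omega
  have hchoose : (l.choose (δ + 1) : K) * (δ + 1) = l.choose δ * (l - δ) := by
    rw [← Nat.cast_sub hδl]; exact_mod_cast Nat.choose_succ_right_eq l δ
  simp only [Nat.add_sub_cancel, add_zero, Nat.cast_add, Nat.cast_one]
  rw [div_mul_eq_div_div_swap, ← mul_div_assoc]
  congr 1
  field_simp
  linear_combination -(y ^ (δ + 1) * m.choose δ * hchoose)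

theorem sum_Icc_eq_chooseSum_right :
    ∑ γ ∈ Icc 1 (min (l + 1) (m + 1)),
        y ^ γ * l.choose (γ - 1) * m.choose (γ - 1) * (((m : K) + 1 - γ) / (t * γ)) =
      y * chooseSum y 0 1 l m / t := by
  rw [chooseSum_comm, ← sum_Icc_eq_chooseSum_left, min_comm]
  exact sum_congr rfl fun _ _ => by ring

end IccSums

section ClosedForm

variable {K : Type*} [Field K] {a b c d : K}

-- `closedForm a b c d l m` is `Ξ(l + 1, m + 1)`; the shift avoids truncated `l - 1`, `m - 1`.
variable (a b c d) in
def closedForm (l m : ℕ) : Matrix (Fin 2) (Fin 2) K :=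
  (a ^ l * d ^ m) •
    ((b * c / a * chooseSum (b * c / (a * d)) 1 0 l m) • !![a, b; 0, 0] +
      (b * c / d * chooseSum (b * c / (a * d)) 0 1 l m) • !![0, 0; c, d] +
      (b * chooseSum (b * c / (a * d)) 0 0 l m) • !![c, d; 0, 0] +
      (c * chooseSum (b * c / (a * d)) 0 0 l m) • !![0, 0; a, b])

theorem closedForm_zero_zero :
    closedForm a b c d 0 0 =
      !![a, b; 0, 0] * !![0, 0; c, d] + !![0, 0; c, d] * !![a, b; 0, 0] := by
  rw [closedForm, top_mul_bottom, bottom_mul_top]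
  simp only [chooseSum_zero_right]
  match_scalars <;> simp

theorem closedForm_succ_zero (ha : a ≠ 0) (l : ℕ) :
    closedForm a b c d (l + 1) 0 =
      !![a, b; 0, 0] * closedForm a b c d l 0 + !![0, 0; c, d] * !![a, b; 0, 0] ^ (l + 2) := by
  simp only [closedForm, top_pow_succ, Matrix.mul_smul, mul_add, top_mul_top, top_mul_bottom,
    bottom_mul_top, smul_smul, smul_add, chooseSum_zero_right]
  match_scalars <;> simp [Nat.choose_one_right] <;> field_simp <;> ring

theorem closedForm_zero_succ (hd : d ≠ 0) (m : ℕ) :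
    closedForm a b c d 0 (m + 1) =
      !![a, b; 0, 0] * !![0, 0; c, d] ^ (m + 2) + !![0, 0; c, d] * closedForm a b c d 0 m := by
  simp only [closedForm, bottom_pow_succ, Matrix.mul_smul, mul_add, top_mul_bottom,
    bottom_mul_top, bottom_mul_bottom, smul_smul, smul_add, chooseSum_zero_left]
  match_scalars <;> simp [Nat.choose_one_right] <;> field_simp <;> ring

theorem closedForm_succ_succ (ha : a ≠ 0) (hd : d ≠ 0) (l m : ℕ) :
    closedForm a b c d (l + 1) (m + 1) =
      !![a, b; 0, 0] * closedForm a b c d l (m + 1) +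
        !![0, 0; c, d] * closedForm a b c d (l + 1) m := by
  simp only [closedForm, Matrix.mul_smul, mul_add, top_mul_top, top_mul_bottom, bottom_mul_top,
    bottom_mul_bottom, smul_smul, smul_add]
  match_scalars
  · rw [chooseSum_succ_left]; field_simp; ring
  · rw [chooseSum_succ_right]; field_simp; ring
  · rw [chooseSum_zero_succ_left]; field_simp; ring
  · rw [chooseSum_zero_succ_right]; field_simp; ring

theorem wordSum_eq_closedForm (ha : a ≠ 0) (hd : d ≠ 0) (l m : ℕ) :
    wordSum !![a, b; 0, 0] !![0, 0; c, d] (l + m + 2) (m + 1) = closedForm a b c d l m := by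
  induction l generalizing m with
  | zero =>
    induction m with
    | zero =>
      rw [closedForm_zero_zero, wordSum_succ_succ, wordSum_self, wordSum_zero_right, pow_one,
        pow_one]
    | succ m ih =>
      rw [closedForm_zero_succ hd, ← ih, show 0 + (m + 1) + 2 = m + 2 + 1 by omega,
        wordSum_succ_succ, wordSum_self, zero_add]
  | succ l ihl =>
    induction m with
    | zero =>
      rw [closedForm_succ_zero ha, ← ihl, show l + 1 + 0 + 2 = l + 0 + 2 + 1 by omega,
        wordSum_succ_succ, wordSum_zero_right, show l + 0 + 2 = l + 2 by omega]
    | succ m ihm =>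
      rw [closedForm_succ_succ ha hd, ← ihl, ← ihm,
        show l + 1 + (m + 1) + 2 = l + (m + 1) + 2 + 1 by omega, wordSum_succ_succ,
        show l + 1 + m + 2 = l + (m + 1) + 2 by omega]

theorem wordSum_eq_sum_Icc [CharZero K] (ha : a ≠ 0) (hb : b ≠ 0) (hc : c ≠ 0) (hd : d ≠ 0)
    {l m : ℕ} (hl : 1 ≤ l) (hm : 1 ≤ m) :
    wordSum !![a, b; 0, 0] !![0, 0; c, d] (l + m) m =
      (a ^ l * d ^ m) •
        ∑ γ ∈ Icc 1 (min l m),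
          ((b * c / (a * d)) ^ γ * ((l - 1).choose (γ - 1) : K) * ((m - 1).choose (γ - 1) : K)) •
            ((((l : K) - γ) / (a * γ)) • !![a, b; 0, 0] +
              (((m : K) - γ) / (d * γ)) • !![0, 0; c, d] +
              (1 / c) • !![c, d; 0, 0] + (1 / b) • !![0, 0; a, b]) := by
  obtain ⟨l, rfl⟩ := Nat.exists_eq_add_of_le' hl
  obtain ⟨m, rfl⟩ := Nat.exists_eq_add_of_le' hm
  rw [show l + 1 + (m + 1) = l + m + 2 by omega, wordSum_eq_closedForm ha hd, closedForm]
  simp only [Nat.add_sub_cancel, Nat.cast_add, Nat.cast_one, smul_add, smul_smul,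
    sum_add_distrib, ← sum_smul]
  match_scalars
  · rw [sum_Icc_eq_chooseSum_left]; field_simp; ring
  · rw [sum_Icc_eq_chooseSum_right]; field_simp; ring
  · rw [sum_Icc_eq_chooseSum]; field_simp; ring
  · rw [sum_Icc_eq_chooseSum]; field_simp; ring

end ClosedForm

theorem eq_det_mul_star_of_mem_unitaryGroup {R : Type*} [CommRing R] [StarRing R] {a b c d : R}
    (hU : !![a, b; c, d] ∈ unitaryGroup (Fin 2) R) :
    d = (a * d - b * c) * star a ∧ c = -((a * d - b * c) * star b) := by
  have h := congrFun₂ (mem_unitaryGroup_iff.1 hU)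
  simp only [star_eq_conjTranspose, mul_apply, conjTranspose_apply, Fin.sum_univ_two] at h
  have h00 : a * star a + b * star b = 1 := by simpa using h 0 0
  have h10 : c * star a + d * star b = 0 := by simpa using h 1 0
  constructor
  · linear_combination b * h10 - d * h00
  · linear_combination a * h10 - c * h00

/-- Lemma 1(i): for `min l m ≥ 1`,
`Ξ(l,m) = a^l (conj a)^m Δ^m ∑_{γ=1}^{l∧m} (-|b|²/|a|²)^γ C(l-1,γ-1) C(m-1,γ-1)
  [ (l-γ)/(aγ) P + (m-γ)/(Δ conj(a) γ) Q - 1/(Δ conj b) R + 1/b S ]`. -/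
theorem xi_formula (a b c d : ℂ)
    (hU : !![a, b; c, d] ∈ Matrix.unitaryGroup (Fin 2) ℂ)
    (habcd : a * b * c * d ≠ 0)
    (l m : ℕ) (hl : 1 ≤ l) (hm : 1 ≤ m) :
    Xi !![a, b; 0, 0] !![0, 0; c, d] l m =
      (a ^ l * (starRingEnd ℂ) a ^ m * (a * d - b * c) ^ m) •
        ∑ γ ∈ Finset.Icc 1 (min l m),
          ((-(((‖b‖ : ℝ) : ℂ) ^ 2 / ((‖a‖ : ℝ) : ℂ) ^ 2)) ^ γ *
              ((l - 1).choose (γ - 1) : ℂ) * ((m - 1).choose (γ - 1) : ℂ)) •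
            ((((l : ℂ) - (γ : ℂ)) / (a * (γ : ℂ))) • !![a, b; 0, 0] +
              (((m : ℂ) - (γ : ℂ)) / ((a * d - b * c) * (starRingEnd ℂ) a * (γ : ℂ))) •
                !![0, 0; c, d] -
              (1 / ((a * d - b * c) * (starRingEnd ℂ) b)) • !![c, d; 0, 0] +
              (1 / b) • !![0, 0; a, b]) := by
  obtain ⟨⟨⟨ha, hb⟩, hc⟩, hd⟩ : ((a ≠ 0 ∧ b ≠ 0) ∧ c ≠ 0) ∧ d ≠ 0 := by
    simpa [mul_ne_zero_iff] using habcd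
  obtain ⟨hdΔ, hcΔ⟩ := eq_det_mul_star_of_mem_unitaryGroup hU
  generalize a * d - b * c = Δ at hdΔ hcΔ ⊢
  simp only [starRingEnd_apply]
  have hΔ : Δ ≠ 0 := fun h => hd (by rw [hdΔ, h, zero_mul])
  have hscale : a ^ l * d ^ m = a ^ l * star a ^ m * Δ ^ m := by rw [hdΔ]; ring
  have hratio : b * c / (a * d) = -(((‖b‖ : ℝ) : ℂ) ^ 2 / ((‖a‖ : ℝ) : ℂ) ^ 2) := by
    rw [hcΔ, hdΔ, ← Complex.mul_conj', ← Complex.mul_conj', starRingEnd_apply, starRingEnd_apply]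
    field_simp
  have hQ (γ : ℂ) : ((m : ℂ) - γ) / (d * γ) = ((m : ℂ) - γ) / (Δ * star a * γ) := by rw [← hdΔ]
  have hR : (1 / c) • !![c, d; 0, 0] = -((1 / (Δ * star b)) • !![c, d; 0, 0]) := by
    rw [← neg_smul, ← one_div_neg_eq_neg_one_div, ← hcΔ]
  rw [Xi_eq_wordSum, wordSum_eq_sum_Icc ha hb hc hd hl hm, hscale, hratio]
  simp only [hQ, hR, ← sub_eq_add_neg]

end
end

section
/- For any unit vector φ = (α,β) ∈ ℂ², the function f(·; φ) is a probability density: ∫_{−|a|}^{|a|} (√(1−|a|²) / (π(1−x²)√(|a|²−x²))) · { 1 − ( |α|² − |β|² + (aα·conj(bβ) + conj(aα)·bβ)/|a|² ) · x } dx = 1. -/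
/-!
With `r = ‖a‖` and `K = √(1 - r²)`, the even weight `K / (π (1 - x²) √(r² - x²))` is the
derivative of `arcsin (K x / (r √(1 - x²))) / π` on `(-r, r)`, and this primitive runs from
`-1/2` to `1/2`. The linear part `x ↦ C x` of the second factor is odd, so it integrates to zero
against the weight. Unitarity gives `‖a‖² + ‖b‖² = 1`, hence `0 < ‖a‖ < 1` because `a b ≠ 0`.
-/

open Real Set intervalIntegral

theorem intervalIntegral.integral_symm_eq_zero_of_odd {E : Type*} [NormedAddCommGroup E]
    [NormedSpace ℝ E] {f : ℝ → E} (hf : ∀ x, f (-x) = -f x) (r : ℝ) :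
    ∫ x in -r..r, f x = 0 := by
  have h := integral_comp_neg (a := -r) (b := r) f
  simp only [hf, integral_neg, neg_neg] at h
  have h2 : (2 : ℝ) • ∫ x in -r..r, f x = 0 := by
    rw [two_smul]; nth_rewrite 1 [← h]; exact neg_add_cancel _
  exact (smul_eq_zero.mp h2).resolve_left two_ne_zero

noncomputable def limitDensity (r x : ℝ) : ℝ :=
  √(1 - r ^ 2) / (π * (1 - x ^ 2) * √(r ^ 2 - x ^ 2))

theorem limitDensity_neg (r x : ℝ) : limitDensity r (-x) = limitDensity r x := by
  simp [limitDensity]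

theorem limitDensity_nonneg (r : ℝ) {x : ℝ} (hx : x ^ 2 ≤ 1) : 0 ≤ limitDensity r x := by
  unfold limitDensity
  have : 0 ≤ 1 - x ^ 2 := by linarith
  positivity

/-- Continuous up to `x = ±r`, where the argument of `arcsin` reaches `±1`, so the fundamental
theorem of calculus applies on `[-r, r]` without improper limits. -/
noncomputable def limitDensityPrimitive (r x : ℝ) : ℝ :=
  arcsin (√(1 - r ^ 2) * x / (r * √(1 - x ^ 2))) / π

theorem continuousOn_limitDensityPrimitive {r : ℝ} (hr0 : 0 < r) (hr1 : r < 1) :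
    ContinuousOn (limitDensityPrimitive r) (Icc (-r) r) := by
  intro x hx
  have : 0 < 1 - x ^ 2 := by nlinarith [hx.1, hx.2]
  unfold limitDensityPrimitive
  fun_prop (disch := positivity)

theorem limitDensityPrimitive_self {r : ℝ} (hr0 : 0 < r) (hr1 : r < 1) :
    limitDensityPrimitive r r = 1 / 2 := by
  have hK : 0 < √(1 - r ^ 2) := sqrt_pos.mpr (by nlinarith)
  rw [limitDensityPrimitive, mul_comm r, div_self (by positivity), arcsin_one]
  field_simp

theorem limitDensityPrimitive_neg_self {r : ℝ} (hr0 : 0 < r) (hr1 : r < 1) :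
    limitDensityPrimitive r (-r) = -(1 / 2) := by
  have hK : 0 < √(1 - r ^ 2) := sqrt_pos.mpr (by nlinarith)
  rw [limitDensityPrimitive, neg_sq, mul_neg, neg_div, mul_comm r, div_self (by positivity),
    arcsin_neg_one]
  field_simp

theorem hasDerivAt_limitDensityPrimitive {r x : ℝ} (hr0 : 0 < r) (hr1 : r < 1)
    (hx : x ∈ Ioo (-r) r) :
    HasDerivAt (limitDensityPrimitive r) (limitDensity r x) x := by
  set K := √(1 - r ^ 2)
  have hK : K ^ 2 = 1 - r ^ 2 := sq_sqrt (by nlinarith)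
  have hrx : 0 < r ^ 2 - x ^ 2 := by nlinarith [hx.1, hx.2]
  have h1x : 0 < 1 - x ^ 2 := by nlinarith
  have hS : √(1 - x ^ 2) ^ 2 = 1 - x ^ 2 := sq_sqrt h1x.le
  have hS0 : 0 < √(1 - x ^ 2) := sqrt_pos.mpr h1x
  have hT : √(r ^ 2 - x ^ 2) ^ 2 = r ^ 2 - x ^ 2 := sq_sqrt hrx.le
  have hsqrt : HasDerivAt (fun y => √(1 - y ^ 2)) (-x / √(1 - x ^ 2)) x := by
    refine (((hasDerivAt_pow 2 x).const_sub 1).sqrt h1x.ne').congr_deriv ?_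
    field_simp
    norm_num
  have harg : HasDerivAt (fun y => K * y / (r * √(1 - y ^ 2)))
      (K / (r * √(1 - x ^ 2) ^ 3)) x := by
    refine (((hasDerivAt_id' x).const_mul K).fun_div (hsqrt.const_mul r)
      (by positivity)).congr_deriv ?_
    field_simp
    rw [hS]; ring
  have hone :
      1 - (K * x / (r * √(1 - x ^ 2))) ^ 2 = (√(r ^ 2 - x ^ 2) / (r * √(1 - x ^ 2))) ^ 2 := by
    field_simp; rw [hK, hS, hT]; ring
  have hlt : (K * x / (r * √(1 - x ^ 2))) ^ 2 < 1 := by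
    have : 0 < (√(r ^ 2 - x ^ 2) / (r * √(1 - x ^ 2))) ^ 2 := by positivity
    linarith
  have hne1 : K * x / (r * √(1 - x ^ 2)) ≠ 1 := by rintro h; rw [h] at hlt; norm_num at hlt
  have hne2 : K * x / (r * √(1 - x ^ 2)) ≠ -1 := by rintro h; rw [h] at hlt; norm_num at hlt
  refine (((hasDerivAt_arcsin hne2 hne1).comp x harg).div_const π).congr_deriv ?_
  rw [hone, sqrt_sq (by positivity), limitDensity]
  field_simp
  rw [hS]

theorem intervalIntegrable_limitDensity {r : ℝ} (hr0 : 0 < r) (hr1 : r < 1) :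
    IntervalIntegrable (limitDensity r) MeasureTheory.volume (-r) r := by
  have hle : -r ≤ r := by linarith
  refine intervalIntegrable_deriv_of_nonneg (g := limitDensityPrimitive r) (g' := limitDensity r)
    ?_ ?_ ?_
  · rw [uIcc_of_le hle]; exact continuousOn_limitDensityPrimitive hr0 hr1
  · rw [min_eq_left hle, max_eq_right hle]
    exact fun x hx => hasDerivAt_limitDensityPrimitive hr0 hr1 hx
  · rw [min_eq_left hle, max_eq_right hle]
    exact fun x hx => limitDensity_nonneg r (by nlinarith [hx.1, hx.2])

theorem integral_limitDensity {r : ℝ} (hr0 : 0 < r) (hr1 : r < 1) :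
    ∫ x in -r..r, limitDensity r x = 1 := by
  rw [integral_eq_sub_of_hasDerivAt_of_le (by linarith)
    (continuousOn_limitDensityPrimitive hr0 hr1)
    (fun x hx => hasDerivAt_limitDensityPrimitive hr0 hr1 hx)
    (intervalIntegrable_limitDensity hr0 hr1), limitDensityPrimitive_self hr0 hr1,
    limitDensityPrimitive_neg_self hr0 hr1]
  norm_num

theorem integral_limitDensity_mul_one_sub {r : ℝ} (hr0 : 0 < r) (hr1 : r < 1) (C : ℝ) :
    ∫ x in -r..r, limitDensity r x * (1 - C * x) = 1 := by
  have hint := intervalIntegrable_limitDensity hr0 hr1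
  have hodd : ∫ x in -r..r, x * limitDensity r x = 0 :=
    integral_symm_eq_zero_of_odd (fun x => by rw [limitDensity_neg, neg_mul]) r
  calc ∫ x in -r..r, limitDensity r x * (1 - C * x)
      = ∫ x in -r..r, limitDensity r x - C * (x * limitDensity r x) := by
        congr 1; ext x; ring
    _ = 1 := by
        rw [integral_sub hint ((hint.continuousOn_mul (continuousOn_id' _)).const_mul C),
          integral_const_mul, hodd, integral_limitDensity hr0 hr1]
        ring

theorem norm_sq_add_norm_sq_of_mem_unitaryGroup {a b c d : ℂ}
    (hU : !![a, b; c, d] ∈ Matrix.unitaryGroup (Fin 2) ℂ) : ‖a‖ ^ 2 + ‖b‖ ^ 2 = 1 := by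
  have h := congrFun (congrFun (Matrix.mem_unitaryGroup_iff.mp hU) 0) 0
  simp only [Fin.isValue, Matrix.mul_apply, Matrix.of_apply, Matrix.cons_val',
    Matrix.cons_val_fin_one, Matrix.cons_val_zero, Matrix.star_apply, RCLike.star_def,
    Fin.sum_univ_two, Matrix.cons_val_one, Matrix.one_apply_eq] at h
  have := congrArg Complex.re h
  simpa [Complex.mul_conj, ← Complex.normSq_eq_norm_sq] using this

open Matrix

theorem density_integral_one_general (a b c d : ℂ)
    (hU : !![a, b; c, d] ∈ Matrix.unitaryGroup (Fin 2) ℂ)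
    (habcd : a * b * c * d ≠ 0)
    (α β : ℂ) :
    ∫ x in (-(‖a‖))..(‖a‖),
        Real.sqrt (1 - ‖a‖ ^ 2) /
            (Real.pi * (1 - x ^ 2) * Real.sqrt (‖a‖ ^ 2 - x ^ 2)) *
          (1 - (‖α‖ ^ 2 - ‖β‖ ^ 2 +
            (a * α * (starRingEnd ℂ) (b * β) +
              (starRingEnd ℂ) (a * α) * (b * β)).re / ‖a‖ ^ 2) * x) = 1 := by
  have ha : 0 < ‖a‖ := norm_pos_iff.mpr (left_ne_zero_of_mul (left_ne_zero_of_mul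
    (left_ne_zero_of_mul habcd)))
  have hb : 0 < ‖b‖ := norm_pos_iff.mpr (right_ne_zero_of_mul (left_ne_zero_of_mul
    (left_ne_zero_of_mul habcd)))
  have ha1 : ‖a‖ < 1 := by nlinarith [norm_sq_add_norm_sq_of_mem_unitaryGroup hU]
  exact integral_limitDensity_mul_one_sub ha ha1 _

/-- The limit density `f(x;φ)` integrates to one over `(-|a|, |a|)`. -/
theorem density_integral_one (a b c d : ℂ)
    (hU : !![a, b; c, d] ∈ Matrix.unitaryGroup (Fin 2) ℂ)
    (habcd : a * b * c * d ≠ 0)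
    (α β : ℂ) (hφ : ‖α‖ ^ 2 + ‖β‖ ^ 2 = 1) :
    ∫ x in (-(‖a‖))..(‖a‖),
        Real.sqrt (1 - ‖a‖ ^ 2) /
            (Real.pi * (1 - x ^ 2) * Real.sqrt (‖a‖ ^ 2 - x ^ 2)) *
          (1 - (‖α‖ ^ 2 - ‖β‖ ^ 2 +
            (a * α * (starRingEnd ℂ) (b * β) +
              (starRingEnd ℂ) (a * α) * (b * β)).re / ‖a‖ ^ 2) * x) = 1 :=
  density_integral_one_general a b c d hU habcd α β
end
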